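/- Suppose v : ℤ → ℂ^k represents a point of the skew shaped positroid S°_{λ/μ}, the box (a,i) belongs to μ (i.e. i ≤ μ̄_a), the box (a−1,i) belongs to λ/μ, and the box (a−1,i+1) belongs to λ/μ (i.e. i+1 ≤ λ̄_{a−1}), where 2 ≤ a ≤ n−k. Then W^op_i ⊆ V(a−1,i+1) and W^op_i ≠ V(a−1,i). -/

import Mathlib

/-- The height `λ̄_a` of the `a`-th column (counted from the right) of the
partition `f = (f 1 ≥ ⋯ ≥ f k)` inside the `k × (n-k)` rectangle. -/
def colHeight (n k : ℕ) (f : ℕ → ℕ) (a : ℕ) : ℕ :=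
  ((Finset.Icc 1 k).filter (fun i => n - k - a + 1 ≤ f i)).card

/-- `b_i = n - k - μ_i + i`. -/
def bvec (n k : ℕ) (m : ℕ → ℕ) (i : ℕ) : ℕ := n - k - m i + i

/-- The short label `J(a,i) = {min (a+j-1) (b_j) : j = 1, …, i}`. -/
def shortLabel (n k : ℕ) (m : ℕ → ℕ) (a i : ℕ) : Finset ℕ :=
  (Finset.Icc 1 i).image (fun j => min (a + j - 1) (bvec n k m j))

/-- The label `I'(a,i) = J(a,i) ∪ {b_{i+1}, …, b_k}`. -/
def fullLabel (n k : ℕ) (m : ℕ → ℕ) (a i : ℕ) : Finset ℕ :=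
  shortLabel n k m a i ∪ (Finset.Icc (i + 1) k).image (bvec n k m)

/-- `I_μ = {b_1, …, b_k}`. -/
def Imu (n k : ℕ) (m : ℕ → ℕ) : Finset ℕ := (Finset.Icc 1 k).image (bvec n k m)

/-- The box `(a,i)` belongs to the skew diagram `λ/μ`. -/
def InSkew (n k : ℕ) (l m : ℕ → ℕ) (a i : ℕ) : Prop :=
  1 ≤ a ∧ a ≤ n - k ∧ 1 ≤ i ∧ i ≤ k ∧ colHeight n k m a < i ∧ i ≤ colHeight n k l a

/-- The box `(a,i)` belongs to the boundary ribbon `R(λ/μ)`. -/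
def InRibbon (n k : ℕ) (l m : ℕ → ℕ) (a i : ℕ) : Prop :=
  InSkew n k l m a i ∧ (a = 1 ∨ colHeight n k l (a - 1) ≤ i)

/-- `S` is the `r`-th entry of the Grassmann necklace `I_{λ/μ}`. -/
def IsNecklaceEntry (n k : ℕ) (l m : ℕ → ℕ) (r : ℕ) (S : Finset ℕ) : Prop :=
  (∃ a i, InRibbon n k l m a i ∧ r = a + i - 1 ∧ S = fullLabel n k m a i) ∨
  ((¬ ∃ a i, InRibbon n k l m a i ∧ r = a + i - 1) ∧ S = Imu n k m)

/-- The family `{v_j : j ∈ S}` is a basis of `ℂ^k`. -/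
def IsBasisFam (k : ℕ) (v : ℤ → Fin k → ℂ) (S : Finset ℕ) : Prop :=
  LinearIndependent ℂ (fun j : ↥S => v ((j : ℕ) : ℤ)) ∧
  Submodule.span ℂ ((fun j : ℕ => v (j : ℤ)) '' (S : Set ℕ)) = ⊤

/-- `v : ℤ → ℂ^k` represents a point of the skew shaped positroid `S°_{λ/μ}`. -/
def RepsPoint (n k : ℕ) (l m : ℕ → ℕ) (v : ℤ → Fin k → ℂ) : Prop :=
  (∀ j : ℤ, v (j + (n : ℤ)) = ((-1 : ℂ) ^ (k - 1)) • v j) ∧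
  (∀ r ∈ Finset.Icc 1 n, ∀ S : Finset ℕ, IsNecklaceEntry n k l m r S → IsBasisFam k v S) ∧
  (∀ a : ℕ, 1 ≤ a → a ≤ n - k →
    v ((a + colHeight n k m a : ℕ) : ℤ) ∈
      Submodule.span ℂ ((fun j : ℕ => v (j : ℤ)) ''
        ↑(Finset.Icc (a + colHeight n k m a + 1) (a + colHeight n k l a))))

/-- `V(a,i) = span{v_j : j ∈ J(a,i)}`. -/
noncomputable def Vspace (n k : ℕ) (m : ℕ → ℕ) (v : ℤ → Fin k → ℂ) (a i : ℕ) :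
    Submodule ℂ (Fin k → ℂ) :=
  Submodule.span ℂ ((fun j : ℕ => v (j : ℤ)) '' ↑(shortLabel n k m a i))

/-- `W^op_p = span(v_{b_1}, …, v_{b_p})`. -/
noncomputable def Wop (n k : ℕ) (m : ℕ → ℕ) (v : ℤ → Fin k → ℂ) (p : ℕ) :
    Submodule ℂ (Fin k → ℂ) :=
  Submodule.span ℂ ((fun j : ℕ => v (j : ℤ)) '' ↑((Finset.Icc 1 p).image (bvec n k m)))

/-- `W_p = span(v_{b_{k-p+1}}, …, v_{b_k})`. -/
noncomputable def Wsp (n k : ℕ) (m : ℕ → ℕ) (v : ℤ → Fin k → ℂ) (p : ℕ) :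
    Submodule ℂ (Fin k → ℂ) :=
  Submodule.span ℂ ((fun j : ℕ => v (j : ℤ)) '' ↑((Finset.Icc (k - p + 1) k).image (bvec n k m)))


/-!
Write `c = μ̄_{a-1}`. For `j ≤ c` one has `b_j ≤ a + j - 2`, and for `c < j ≤ i` the box `(a, j)`
lies in `μ` while `(a - 1, j)` does not, which forces `b_j = a + j - 1`. Hence `J(a-1, i+1)`
contains `b_1, …, b_i` as well as `a + c - 1 ∈ J(a-1, i)`, which is none of the `b_j`.
Sliding the box `(a-1, i+1)` down the antidiagonal until it reaches the ribbon `R(λ/μ)` only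
enlarges its short label, so `J(a-1, i+1)` lies in a necklace label and indexes independent
vectors. Therefore `v_{a+c-1} ∉ W^op_i`, although `v_{a+c-1} ∈ V(a-1, i)`.

The lemmas below use `a + 1` for the paper's `a`.
-/

open Finset

section ColumnHeight

variable {n k : ℕ} {f : ℕ → ℕ}

lemma colHeight_le (n k : ℕ) (f : ℕ → ℕ) (a : ℕ) : colHeight n k f a ≤ k :=
  (card_filter_le _ _).trans (by simp)

lemma colHeight_mono (n k : ℕ) (f : ℕ → ℕ) : Monotone (colHeight n k f) := fun _ _ hab =>
  card_le_card <| monotone_filter_right _ fun _ h => by omega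

lemma le_colHeight_iff (hf : AntitoneOn f (Set.Icc 1 k)) {a j : ℕ} (hj : j ∈ Set.Icc 1 k) :
    j ≤ colHeight n k f a ↔ n - k - a + 1 ≤ f j := by
  obtain ⟨hj1, hjk⟩ := hj
  constructor
  · intro hja
    by_contra hfj
    have hsub : (Icc 1 k).filter (fun x => n - k - a + 1 ≤ f x) ⊆ Icc 1 (j - 1) := by
      intro x hx
      simp only [mem_filter, mem_Icc] at hx ⊢
      refine ⟨hx.1.1, ?_⟩
      by_contra hxj
      have := hf ⟨hj1, hjk⟩ ⟨hx.1.1, hx.1.2⟩ (by omega : j ≤ x)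
      omega
    have hcard := card_le_card hsub
    unfold colHeight at hja
    rw [Nat.card_Icc] at hcard
    omega
  · intro hfj
    have hsub : Icc 1 j ⊆ (Icc 1 k).filter (fun x => n - k - a + 1 ≤ f x) := by
      intro x hx
      simp only [mem_filter, mem_Icc] at hx ⊢
      exact ⟨⟨hx.1, hx.2.trans hjk⟩, hfj.trans (hf ⟨hx.1, hx.2.trans hjk⟩ ⟨hj1, hjk⟩ hx.2)⟩
    calc j = #(Icc 1 j) := by simp
      _ ≤ colHeight n k f a := card_le_card hsub

end ColumnHeight

section Labels

variable {n k : ℕ} {m : ℕ → ℕ}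

lemma bvec_strictMonoOn (hm : AntitoneOn m (Set.Icc 1 k)) :
    StrictMonoOn (bvec n k m) (Set.Icc 1 k) := fun i hi j hj hij => by
    have := hm hi hj hij.le
    unfold bvec
    omega

lemma bvec_lt_of_le_colHeight (hm : AntitoneOn m (Set.Icc 1 k)) {a j : ℕ} (ha : 1 ≤ a)
    (hj : 1 ≤ j) (hja : j ≤ colHeight n k m a) : bvec n k m j < a + j := by
  have := (le_colHeight_iff hm ⟨hj, hja.trans (colHeight_le n k m a)⟩).1 hja
  unfold bvec
  omega

lemma bvec_eq_of_colHeight_lt (hm : AntitoneOn m (Set.Icc 1 k)) {a j : ℕ}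
    (hja : colHeight n k m a < j) (hja' : j ≤ colHeight n k m (a + 1)) : bvec n k m j = a + j := by
  have hj : j ∈ Set.Icc 1 k := ⟨by omega, hja'.trans (colHeight_le n k m _)⟩
  have h₁ := (le_colHeight_iff hm hj).1 hja'
  have h₂ := mt (le_colHeight_iff (n := n) (a := a) hm hj).2 (by omega)
  unfold bvec
  omega

lemma shortLabel_succ_subset (hm : AntitoneOn m (Set.Icc 1 k)) {a i : ℕ} (ha : 1 ≤ a)
    (hik : i + 1 ≤ k) : shortLabel n k m (a + 1) i ⊆ shortLabel n k m a (i + 1) := by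
  intro x hx
  simp only [shortLabel, mem_image, mem_Icc] at hx ⊢
  obtain ⟨j, ⟨hj1, hji⟩, rfl⟩ := hx
  by_cases hb : bvec n k m j < a + j
  · exact ⟨j, ⟨hj1, by omega⟩, by omega⟩
  · have := bvec_strictMonoOn (n := n) hm ⟨hj1, by omega⟩ ⟨by omega, hik.trans' (by omega)⟩
      (by omega : j < j + 1)
    exact ⟨j + 1, ⟨by omega, by omega⟩, by omega⟩

end Labels

section Ribbon

variable {n k : ℕ} {l m : ℕ → ℕ}

lemma InSkew.exists_inRibbon_shortLabel_subset (hm : AntitoneOn m (Set.Icc 1 k)) :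
    ∀ {a i : ℕ}, InSkew n k l m a i →
      ∃ a' i', InRibbon n k l m a' i' ∧ shortLabel n k m a i ⊆ shortLabel n k m a' i'
  | 0, _, h => absurd h.1 (by omega)
  | a + 1, i, h => by
    by_cases hR : a + 1 = 1 ∨ colHeight n k l (a + 1 - 1) ≤ i
    · exact ⟨a + 1, i, ⟨h, hR⟩, subset_rfl⟩
    obtain ⟨-, ha, hi, -, hmi, -⟩ := h
    have hil : i + 1 ≤ colHeight n k l a := not_le.1 (not_or.1 hR).2
    have hik := hil.trans (colHeight_le n k l a)
    have hskew : InSkew n k l m a (i + 1) := by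
      have := colHeight_mono n k m (by omega : a ≤ a + 1)
      exact ⟨by omega, by omega, by omega, hik, by omega, hil⟩
    obtain ⟨a', i', hR', hsub⟩ := InSkew.exists_inRibbon_shortLabel_subset hm hskew
    exact ⟨a', i', hR', (shortLabel_succ_subset hm (by omega) hik).trans hsub⟩

lemma RepsPoint.linearIndepOn_shortLabel {v : ℤ → Fin k → ℂ} (hv : RepsPoint n k l m v)
    (hm : AntitoneOn m (Set.Icc 1 k)) {a i : ℕ} (h : InSkew n k l m a i) :
    LinearIndepOn ℂ (fun j : ℕ => v j) (shortLabel n k m a i : Set ℕ) := by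
  obtain ⟨a', i', hR, hsub⟩ := h.exists_inRibbon_shortLabel_subset hm
  obtain ⟨ha', ha'k, hi', hi'k, -, -⟩ := hR.1
  have hr : a' + i' - 1 ∈ Icc 1 n := mem_Icc.2 ⟨by omega, by omega⟩
  exact LinearIndepOn.mono (hv.2.1 _ hr _ (Or.inl ⟨a', i', hR, rfl, rfl⟩)).1
    (coe_subset.2 (hsub.trans subset_union_left))

end Ribbon

section Configuration

variable {n k : ℕ} {m : ℕ → ℕ}

lemma bvec_image_subset_shortLabel (hm : AntitoneOn m (Set.Icc 1 k)) {a i : ℕ} (ha : 1 ≤ a)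
    (hia : i ≤ colHeight n k m (a + 1)) (hik : i + 1 ≤ k) :
    (Icc 1 i).image (bvec n k m) ⊆ shortLabel n k m a (i + 1) := by
  intro x hx
  simp only [shortLabel, mem_image, mem_Icc] at hx ⊢
  obtain ⟨j, ⟨hj1, hji⟩, rfl⟩ := hx
  by_cases hja : j ≤ colHeight n k m a
  · have := bvec_lt_of_le_colHeight hm ha hj1 hja
    exact ⟨j, ⟨hj1, by omega⟩, by omega⟩
  · have h₁ := bvec_eq_of_colHeight_lt hm (not_le.1 hja) (hji.trans hia)
    have h₂ := bvec_strictMonoOn (n := n) hm ⟨hj1, by omega⟩ ⟨by omega, by omega⟩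
      (by omega : j < j + 1)
    exact ⟨j + 1, ⟨by omega, by omega⟩, by omega⟩

lemma add_colHeight_mem_shortLabel (hm : AntitoneOn m (Set.Icc 1 k)) {a i : ℕ}
    (hai : colHeight n k m a < i) (hia : i ≤ colHeight n k m (a + 1)) :
    a + colHeight n k m a ∈ shortLabel n k m a i := by
  have := bvec_eq_of_colHeight_lt (n := n) (a := a) (j := colHeight n k m a + 1) hm
    (by omega) (by omega)
  simp only [shortLabel, mem_image, mem_Icc]
  exact ⟨colHeight n k m a + 1, ⟨by omega, hai⟩, by omega⟩

lemma add_colHeight_notMem_bvec_image (hm : AntitoneOn m (Set.Icc 1 k)) {a i : ℕ} (ha : 1 ≤ a)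
    (hia : i ≤ colHeight n k m (a + 1)) :
    a + colHeight n k m a ∉ (Icc 1 i).image (bvec n k m) := by
  simp only [mem_image, mem_Icc, not_exists, not_and]
  intro j ⟨hj1, hji⟩ hj
  by_cases hja : j ≤ colHeight n k m a
  · have := bvec_lt_of_le_colHeight hm ha hj1 hja
    omega
  · have := bvec_eq_of_colHeight_lt hm (not_le.1 hja) (hji.trans hia)
    omega

end Configuration

theorem stmt14_general (n k : ℕ) (l m : ℕ → ℕ)
    (hmmono : ∀ i j, 1 ≤ i → i ≤ j → j ≤ k → m j ≤ m i)
    (v : ℤ → Fin k → ℂ) (hv : RepsPoint n k l m v)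
    (a i : ℕ)
    (hmu : i ≤ colHeight n k m a)
    (h1 : InSkew n k l m (a - 1) i) (h2 : InSkew n k l m (a - 1) (i + 1)) :
    Wop n k m v i ≤ Vspace n k m v (a - 1) (i + 1) ∧
    Wop n k m v i ≠ Vspace n k m v (a - 1) i := by
  have hm : AntitoneOn m (Set.Icc 1 k) := fun x hx y hy hxy => hmmono x y hx.1 hxy hy.2
  obtain ⟨a, rfl⟩ : ∃ a', a = a' + 1 := ⟨a - 1, by have := h1.1; omega⟩
  rw [Nat.add_sub_cancel] at h1 h2 ⊢
  have hsub := bvec_image_subset_shortLabel hm h1.1 hmu h2.2.2.2.1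
  refine ⟨Submodule.span_mono (Set.image_mono (coe_subset.2 hsub)), fun hW => ?_⟩
  have hnew := add_colHeight_mem_shortLabel hm h1.2.2.2.2.1 hmu
  have hnew' : a + colHeight n k m a ∈ shortLabel n k m a (i + 1) :=
    image_subset_image (Icc_subset_Icc_right (Nat.le_succ i)) hnew
  have hind := (hv.linearIndepOn_shortLabel hm h2).mono
    (Set.insert_subset (mem_coe.2 hnew') (coe_subset.2 hsub))
  refine hind.notMem_span_of_insert (add_colHeight_notMem_bvec_image hm h1.1 hmu) ?_
  have hmemV : v ((a + colHeight n k m a : ℕ) : ℤ) ∈ Vspace n k m v a i :=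
    Submodule.subset_span ⟨_, hnew, rfl⟩
  rwa [← hW] at hmemV

theorem stmt14 (n k : ℕ) (l m : ℕ → ℕ)
    (hk : 0 < k) (hkn : k < n)
    (hlmono : ∀ i j, 1 ≤ i → i ≤ j → j ≤ k → l j ≤ l i)
    (hl1 : l 1 ≤ n - k)
    (hmmono : ∀ i j, 1 ≤ i → i ≤ j → j ≤ k → m j ≤ m i)
    (hml : ∀ i, 1 ≤ i → i ≤ k → m i ≤ l i)
    (v : ℤ → Fin k → ℂ) (hv : RepsPoint n k l m v)
    (a i : ℕ) (ha1 : 2 ≤ a) (ha2 : a ≤ n - k)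
    (hmu : i ≤ colHeight n k m a)
    (h1 : InSkew n k l m (a - 1) i) (h2 : InSkew n k l m (a - 1) (i + 1)) :
    Wop n k m v i ≤ Vspace n k m v (a - 1) (i + 1) ∧
    Wop n k m v i ≠ Vspace n k m v (a - 1) i :=
  stmt14_general n k l m hmmono v hv a i hmu h1 h2
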